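/- Let M, N, L be positive integers with L ≥ 2 and let f be the piecewise linear DMT function (f(k) = (M-k)(N-k) at integers, zero beyond min(M,N)). For any x with 0 < x < min(M,N), one has L·f(x/L) > f(x); i.e., the optimal DMT of a parallel channel of L i.i.d. M×N MIMO sub-channels, d(r) = L·f(r/L), strictly dominates the single-channel DMT at every multiplexing gain r = x ∈ (0, min(M,N)). -/

import Mathlib

/-- The DMT curve of an M×N MIMO channel: piecewise linear through the points
`(k, (M-k)(N-k))` for integers `k = 0, ..., min M N`, and zero for `x ≥ min M N`. -/
noncomputable def dmt (M N : ℕ) (x : ℝ) : ℝ :=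
  if (min M N : ℝ) ≤ x then 0
  else
    let k : ℝ := (⌊x⌋ : ℝ)
    ((M : ℝ) - k) * ((N : ℝ) - k) +
      (x - k) * (((M : ℝ) - k - 1) * ((N : ℝ) - k - 1) - ((M : ℝ) - k) * ((N : ℝ) - k))

/-!
The curve `f = dmt M N` linearly interpolates the values `(M - k)(N - k)`, which decrease in
`k ≤ min M N` and vanish at `k = min M N`; so `f` is antitone on all of `ℝ` and positive left of
`min M N`. For `a = x / L < x` this gives `L f(a) ≥ 2 f(a) > f(a) ≥ f(x)`.
-/

lemma sub_mul_sub_antitoneOn (a b : ℝ) :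
    AntitoneOn (fun k => (a - k) * (b - k)) (Set.Iic (min a b)) := by
  intro j hj k hk hjk
  simp only [Set.mem_Iic, le_min_iff] at hj hk
  nlinarith [mul_nonneg (sub_nonneg.mpr hjk) (by linarith : (0 : ℝ) ≤ a - j + (b - k))]

namespace dmt

variable {M N : ℕ} {y z : ℝ}

lemma eq_of_lt (hy : y < (min M N : ℝ)) :
    dmt M N y = (1 - Int.fract y) * ((M - ⌊y⌋) * (N - ⌊y⌋)) +
      Int.fract y * ((M - (⌊y⌋ + 1)) * (N - (⌊y⌋ + 1))) := by
  simp only [dmt, if_neg (not_le.mpr hy), Int.fract]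
  ring

lemma of_min_le (hy : (min M N : ℝ) ≤ y) : dmt M N y = 0 := if_pos hy

lemma floor_add_one_le_min (hy : y < (min M N : ℝ)) : (⌊y⌋ : ℝ) + 1 ≤ (min M N : ℝ) := by
  have : ⌊y⌋ + 1 ≤ ((min M N : ℕ) : ℤ) := Int.floor_lt.mpr (by exact_mod_cast hy)
  exact_mod_cast this

lemma node_succ_le_node (hy : y < (min M N : ℝ)) :
    ((M : ℝ) - (⌊y⌋ + 1)) * (N - (⌊y⌋ + 1)) ≤ ((M : ℝ) - ⌊y⌋) * (N - ⌊y⌋) := by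
  have hk := floor_add_one_le_min hy
  exact sub_mul_sub_antitoneOn M N (Set.mem_Iic.mpr (by linarith)) hk (by linarith)

lemma node_succ_le_le_node (hy : y < (min M N : ℝ)) :
    ((M : ℝ) - (⌊y⌋ + 1)) * (N - (⌊y⌋ + 1)) ≤ dmt M N y ∧
      dmt M N y ≤ ((M : ℝ) - ⌊y⌋) * (N - ⌊y⌋) := by
  have hnode := node_succ_le_node hy
  have ht0 := Int.fract_nonneg y
  have ht1 := Int.fract_lt_one y
  rw [eq_of_lt hy]
  constructor <;> nlinarith

lemma pos_of_lt (hy : y < (min M N : ℝ)) : 0 < dmt M N y := by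
  have hk := floor_add_one_le_min hy
  have hM : (1 : ℝ) ≤ M - ⌊y⌋ := by linarith [min_le_left (M : ℝ) N]
  have hN : (1 : ℝ) ≤ N - ⌊y⌋ := by linarith [min_le_right (M : ℝ) N]
  have hM' : (0 : ℝ) ≤ M - (⌊y⌋ + 1) := by linarith
  have hN' : (0 : ℝ) ≤ N - (⌊y⌋ + 1) := by linarith
  have ht0 := Int.fract_nonneg y
  have ht1 := Int.fract_lt_one y
  rw [eq_of_lt hy]
  nlinarith [mul_nonneg ht0 (mul_nonneg hM' hN'), one_le_mul_of_one_le_of_one_le hM hN]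

lemma nonneg (y : ℝ) : 0 ≤ dmt M N y := by
  by_cases hy : (min M N : ℝ) ≤ y
  · exact (of_min_le hy).ge
  · exact (pos_of_lt (not_le.mp hy)).le

lemma antitone : Antitone (dmt M N) := by
  intro y z hyz
  rcases le_or_gt (min M N : ℝ) z with hz | hz
  · rw [of_min_le hz]
    exact nonneg y
  have hy : y < (min M N : ℝ) := hyz.trans_lt hz
  rcases (Int.floor_le_floor hyz).eq_or_lt with hfloor | hfloor
  · have hslope := node_succ_le_node hy
    have hfract : Int.fract y ≤ Int.fract z := by
      rw [Int.fract, Int.fract, hfloor]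
      linarith
    rw [eq_of_lt hy, eq_of_lt hz, ← hfloor]
    nlinarith [mul_le_mul_of_nonneg_right hfract (sub_nonneg.mpr hslope)]
  · have hstep : (⌊y⌋ : ℝ) + 1 ≤ ⌊z⌋ := by exact_mod_cast hfloor
    calc dmt M N z ≤ ((M : ℝ) - ⌊z⌋) * (N - ⌊z⌋) := (node_succ_le_le_node hz).2
      _ ≤ ((M : ℝ) - (⌊y⌋ + 1)) * (N - (⌊y⌋ + 1)) :=
        sub_mul_sub_antitoneOn M N (floor_add_one_le_min hy)
          (Set.mem_Iic.mpr (by linarith [floor_add_one_le_min hz])) hstep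
      _ ≤ dmt M N y := (node_succ_le_le_node hy).1

end dmt

theorem stmt9_general (M N L : ℕ) (hL : 2 ≤ L)
    (x : ℝ) (hx0 : 0 < x) (hx1 : x < (min M N : ℝ)) :
    (L : ℝ) * dmt M N (x / L) > dmt M N x := by
  have hL' : (2 : ℝ) ≤ L := by exact_mod_cast hL
  have hax : x / L < x := div_lt_self hx0 (by linarith)
  have hpos : 0 < dmt M N (x / L) := dmt.pos_of_lt (hax.trans hx1)
  have hmono : dmt M N x ≤ dmt M N (x / L) := dmt.antitone hax.le
  nlinarith

/-- The parallel-channel DMT L·f(x/L) strictly dominates the single-channel DMT f(x)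
for every x ∈ (0, min(M,N)). -/
theorem stmt9 (M N L : ℕ) (hM : 0 < M) (hN : 0 < N) (hL : 2 ≤ L)
    (x : ℝ) (hx0 : 0 < x) (hx1 : x < (min M N : ℝ)) :
    (L : ℝ) * dmt M N (x / L) > dmt M N x :=
  stmt9_general M N L hL x hx0 hx1
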